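/- Let x₁ < ⋯ < xₙ be n collinear points (n odd, n = 2p+1 with p ≥ 1) with all consecutive gaps x_{i+1} − x_i ≤ 2r. If for some i ∈ {1,…,p−1} the distance x_{2i+2} − x_{2i} > 2r, then no set of p+1 disks of radius r identifies the points, i.e., any identifying set of radius-r disks has size at least p+2. -/

import Mathlib

/-!
A disk meets the line in a segment, so the indices of the points it contains form an interval.
Identifying a block of `m` consecutive points means covering its two ends and separating each of
its `m - 1` consecutive pairs; an interval separates at most two such pairs, and one fewer for
each end of the block it contains, so the block needs at least `(m + 1) / 2` disks (rounded up).
A disk of radius `r` has diameter `2 r`, so none meets both `x₁, …, x_{2i}` and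
`x_{2i+2}, …, x_{2p+1}`; the two blocks need `i + 1` and `p - i + 1` disks.
-/

noncomputable section

/-- The Euclidean plane. -/
abbrev Pt : Type := EuclideanSpace ℝ (Fin 2)

instance : DecidableEq Pt := Classical.decEq _

/-- A disk: a closed Euclidean ball with nonnegative radius. -/
def IsDisk (D : Set Pt) : Prop :=
  ∃ (c : Pt) (r : ℝ), 0 ≤ r ∧ D = Metric.closedBall c r

/-- A family of disks identifies a finite point set: every point is covered and
every pair of distinct points is separated by some disk. -/
def Identifies (𝒟 : Finset (Set Pt)) (P : Finset Pt) : Prop :=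
  (∀ p ∈ P, ∃ D ∈ 𝒟, p ∈ D) ∧
  (∀ p ∈ P, ∀ q ∈ P, p ≠ q → ∃ D ∈ 𝒟, (p ∈ D ∧ q ∉ D) ∨ (q ∈ D ∧ p ∉ D))

/-- Minimum number of disks needed to identify `P`. -/
def gammaID (P : Finset Pt) : ℕ :=
  sInf {k | ∃ 𝒟 : Finset (Set Pt), 𝒟.card = k ∧ (∀ D ∈ 𝒟, IsDisk D) ∧ Identifies 𝒟 P}

open Finset

section Intervals

open scoped Classical

variable {S : Set ℕ}

theorem Set.OrdConnected.card_exits_add_le_one (hS : S.OrdConnected) (a b : ℕ) :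
    #{j ∈ Finset.Ico a b | j ∈ S ∧ j + 1 ∉ S} + (if b ∈ S then 1 else 0) ≤ 1 := by
  have le_of_exit : ∀ j ∈ S, j + 1 ∉ S → ∀ k ∈ S, k ≤ j := fun j hj hj1 k hk =>
    not_lt.1 fun hjk => hj1 (hS.out hj hk ⟨j.le_succ, hjk⟩)
  split_ifs with hb
  · suffices #{j ∈ Finset.Ico a b | j ∈ S ∧ j + 1 ∉ S} = 0 by omega
    refine card_eq_zero.2 (filter_eq_empty_iff.2 fun j hj ⟨hjS, hj1⟩ => ?_)
    have := le_of_exit j hjS hj1 b hb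
    have := (Finset.mem_Ico.1 hj).2
    omega
  · rw [add_zero]
    refine card_le_one.2 fun j hj k hk => ?_
    obtain ⟨-, hjS, hj1⟩ := mem_filter.1 hj
    obtain ⟨-, hkS, hk1⟩ := mem_filter.1 hk
    exact le_antisymm (le_of_exit k hkS hk1 j hjS) (le_of_exit j hjS hj1 k hkS)

theorem Set.OrdConnected.card_entries_add_le_one (hS : S.OrdConnected) (a b : ℕ) :
    #{j ∈ Finset.Ico a b | j ∉ S ∧ j + 1 ∈ S} + (if a ∈ S then 1 else 0) ≤ 1 := by
  have lt_of_entry : ∀ j ∉ S, j + 1 ∈ S → ∀ k ∈ S, j < k := fun j hj hj1 k hk =>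
    not_le.1 fun hkj => hj (hS.out hk hj1 ⟨hkj, j.le_succ⟩)
  split_ifs with ha
  · suffices #{j ∈ Finset.Ico a b | j ∉ S ∧ j + 1 ∈ S} = 0 by omega
    refine card_eq_zero.2 (filter_eq_empty_iff.2 fun j hj ⟨hjS, hj1⟩ => ?_)
    have := lt_of_entry j hjS hj1 a ha
    have := (Finset.mem_Ico.1 hj).1
    omega
  · rw [add_zero]
    refine card_le_one.2 fun j hj k hk => ?_
    obtain ⟨-, hjS, hj1⟩ := mem_filter.1 hj
    obtain ⟨-, hkS, hk1⟩ := mem_filter.1 hk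
    have := lt_of_entry j hjS hj1 (k + 1) hk1
    have := lt_of_entry k hkS hk1 (j + 1) hj1
    omega

theorem Set.OrdConnected.card_boundary_add_le_two (hS : S.OrdConnected) (a b : ℕ) :
    #{j ∈ Finset.Ico a b | ¬(j ∈ S ↔ j + 1 ∈ S)} + (if a ∈ S then 1 else 0)
      + (if b ∈ S then 1 else 0) ≤ 2 := by
  have hsplit : {j ∈ Finset.Ico a b | ¬(j ∈ S ↔ j + 1 ∈ S)}
      ⊆ {j ∈ Finset.Ico a b | j ∈ S ∧ j + 1 ∉ S} ∪ {j ∈ Finset.Ico a b | j ∉ S ∧ j + 1 ∈ S} := by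
    intro j hj
    simp only [Finset.mem_union, Finset.mem_filter] at hj ⊢
    tauto
  have := (Finset.card_le_card hsplit).trans (Finset.card_union_le _ _)
  have := hS.card_exits_add_le_one a b
  have := hS.card_entries_add_le_one a b
  omega

theorem sub_add_two_le_two_mul_card_of_separates {ι : Type*} (𝒮 : Finset ι) (S : ι → Set ℕ)
    (hS : ∀ i ∈ 𝒮, (S i).OrdConnected) {a b : ℕ} (hab : a ≤ b)
    (ha : ∃ i ∈ 𝒮, a ∈ S i) (hb : ∃ i ∈ 𝒮, b ∈ S i)
    (hsep : ∀ j ∈ Ico a b, ∃ i ∈ 𝒮, ¬(j ∈ S i ↔ j + 1 ∈ S i)) :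
    b - a + 2 ≤ 2 * #{i ∈ 𝒮 | (S i ∩ Set.Icc a b).Nonempty} := by
  set 𝒯 := {i ∈ 𝒮 | (S i ∩ Set.Icc a b).Nonempty}
  have hcut : b - a ≤ ∑ i ∈ 𝒯, #{j ∈ Ico a b | ¬(j ∈ S i ↔ j + 1 ∈ S i)} := by
    calc b - a = #(Ico a b) := (Nat.card_Ico a b).symm
      _ ≤ #(𝒯.biUnion fun i => {j ∈ Ico a b | ¬(j ∈ S i ↔ j + 1 ∈ S i)}) := by
        refine card_le_card fun j hj => ?_
        obtain ⟨i, hi, hij⟩ := hsep j hj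
        obtain ⟨haj, hjb⟩ := mem_Ico.1 hj
        have hmeet : (S i ∩ Set.Icc a b).Nonempty := by
          by_cases hjS : j ∈ S i
          · exact ⟨j, hjS, haj, hjb.le⟩
          · exact ⟨j + 1, by tauto, by omega, hjb⟩
        exact mem_biUnion.2 ⟨i, mem_filter.2 ⟨hi, hmeet⟩, mem_filter.2 ⟨hj, hij⟩⟩
      _ ≤ _ := card_biUnion_le
  have hend : ∀ k ∈ Set.Icc a b, (∃ i ∈ 𝒮, k ∈ S i) →
      1 ≤ ∑ i ∈ 𝒯, (if k ∈ S i then 1 else 0) := by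
    rintro k hk ⟨i, hi, hki⟩
    calc 1 = (if k ∈ S i then 1 else 0) := (if_pos hki).symm
      _ ≤ _ := single_le_sum (f := fun i => if k ∈ S i then 1 else 0)
        (fun _ _ => Nat.zero_le _) (mem_filter.2 ⟨hi, ⟨k, hki, hk⟩⟩)
  have hle := sum_le_sum fun i (hi : i ∈ 𝒯) =>
    (hS i (mem_filter.1 hi).1).card_boundary_add_le_two a b
  rw [sum_add_distrib, sum_add_distrib, sum_const, smul_eq_mul] at hle
  have := hend a ⟨le_rfl, hab⟩ ha
  have := hend b ⟨hab, le_rfl⟩ hb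
  omega

end Intervals

theorem Set.OrdConnected.inter_preimage_of_monotoneOn {α β : Type*} [Preorder α] [Preorder β]
    {f : β → α} {s : Set α} {t : Set β} (ht : t.OrdConnected) (hs : s.OrdConnected)
    (hf : MonotoneOn f t) : (t ∩ f ⁻¹' s).OrdConnected := by
  obtain ⟨u, hu, h⟩ := hs.preimage_monotoneOn hf
  exact h ▸ ht.inter hu

def onAxis (t : ℝ) : Pt := !₂[t, 0]

theorem isometry_onAxis : Isometry onAxis := by
  refine Isometry.of_dist_eq fun s t => ?_
  rw [EuclideanSpace.dist_eq]
  simp [onAxis, Fin.sum_univ_two, Real.dist_eq, Real.sqrt_sq_eq_abs]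

theorem isLinearMap_onAxis : IsLinearMap ℝ onAxis where
  map_add s t := by ext i; fin_cases i <;> simp [onAxis]
  map_smul c t := by ext i; fin_cases i <;> simp [onAxis]

theorem Convex.ordConnected_preimage_onAxis {s : Set Pt} (hs : Convex ℝ s) :
    (onAxis ⁻¹' s).OrdConnected :=
  convex_iff_ordConnected.1 (hs.is_linear_preimage isLinearMap_onAxis)

theorem dist_le_two_mul_of_onAxis_mem_closedBall {s t r : ℝ} {c : Pt}
    (hs : onAxis s ∈ Metric.closedBall c r) (ht : onAxis t ∈ Metric.closedBall c r) :
    dist s t ≤ 2 * r := by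
  rw [← isometry_onAxis.dist_eq]
  linarith [dist_triangle_right (onAxis s) (onAxis t) c, Metric.mem_closedBall.1 hs,
    Metric.mem_closedBall.1 ht]

def axisIndices (x : ℕ → ℝ) (n : ℕ) (D : Set Pt) : Set ℕ :=
  Set.Icc 1 n ∩ x ⁻¹' (onAxis ⁻¹' D)

section AxisIndices

open scoped Classical

variable {x : ℕ → ℝ} {n : ℕ} {𝒟 : Finset (Set Pt)}

theorem Convex.ordConnected_axisIndices (hx : MonotoneOn x (Set.Icc 1 n)) {D : Set Pt}
    (hD : Convex ℝ D) : (axisIndices x n D).OrdConnected :=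
  Set.ordConnected_Icc.inter_preimage_of_monotoneOn hD.ordConnected_preimage_onAxis hx

theorem Identifies.exists_mem_axisIndices
    (hI : Identifies 𝒟 ((Finset.Icc 1 n).image fun j => onAxis (x j)))
    {j : ℕ} (hj : j ∈ Set.Icc 1 n) : ∃ D ∈ 𝒟, j ∈ axisIndices x n D :=
  (hI.1 _ (mem_image_of_mem _ (mem_Icc.2 hj))).imp fun _ ⟨hD, hjD⟩ => ⟨hD, hj, hjD⟩

theorem Identifies.exists_separating_axisIndices
    (hI : Identifies 𝒟 ((Finset.Icc 1 n).image fun j => onAxis (x j)))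
    (hx : Set.InjOn x (Set.Icc 1 n)) {j : ℕ} (hj : j ∈ Finset.Ico 1 n) :
    ∃ D ∈ 𝒟, ¬(j ∈ axisIndices x n D ↔ j + 1 ∈ axisIndices x n D) := by
  obtain ⟨hj1, hjn⟩ := mem_Ico.1 hj
  have hne : onAxis (x j) ≠ onAxis (x (j + 1)) :=
    isometry_onAxis.injective.ne (hx.ne ⟨hj1, hjn.le⟩ ⟨by omega, hjn⟩ (by omega))
  obtain ⟨D, hD, hsep⟩ := hI.2 _ (mem_image_of_mem _ (mem_Icc.2 ⟨hj1, hjn.le⟩))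
    _ (mem_image_of_mem _ (mem_Icc.2 ⟨by omega, hjn⟩)) hne
  refine ⟨D, hD, ?_⟩
  rw [axisIndices, Set.mem_inter_iff, Set.mem_inter_iff, and_iff_right ⟨hj1, hjn.le⟩,
    and_iff_right ⟨by omega, hjn⟩]
  tauto

theorem disjoint_filter_axisIndices_of_two_mul_lt (hx : MonotoneOn x (Set.Icc 1 n)) {r : ℝ}
    (hD : ∀ D ∈ 𝒟, ∃ c : Pt, D = Metric.closedBall c r) {m m' : ℕ}
    (hm : m ∈ Set.Icc 1 n) (hm' : m' ∈ Set.Icc 1 n) (hgap : 2 * r < x m' - x m) :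
    Disjoint {D ∈ 𝒟 | (axisIndices x n D ∩ Set.Icc 1 m).Nonempty}
      {D ∈ 𝒟 | (axisIndices x n D ∩ Set.Icc m' n).Nonempty} := by
  refine disjoint_filter.2 ?_
  rintro D hD' ⟨j, ⟨hj, hjD⟩, -, hjm⟩ ⟨l, ⟨hl, hlD⟩, hm'l, -⟩
  obtain ⟨c, rfl⟩ := hD D hD'
  have hjl := dist_le_two_mul_of_onAxis_mem_closedBall hjD hlD
  rw [Real.dist_eq, abs_sub_comm] at hjl
  linarith [le_abs_self (x l - x j), hx hj hm hjm, hx hm' hl hm'l]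

end AxisIndices

theorem no_perfect_identification (p : ℕ) (r : ℝ)
    (x : ℕ → ℝ) (hmono : StrictMonoOn x (Set.Icc 1 (2 * p + 1)))
    (hbig : ∃ i, 1 ≤ i ∧ i ≤ p - 1 ∧ 2 * r < x (2 * i + 2) - x (2 * i))
    (𝒟 : Finset (Set Pt)) (hD : ∀ D ∈ 𝒟, ∃ c : Pt, D = Metric.closedBall c r)
    (hI : Identifies 𝒟 ((Finset.Icc 1 (2 * p + 1)).image (fun j => (!₂[x j, 0] : Pt)))) :
    p + 2 ≤ 𝒟.card := by
  classical
  obtain ⟨i, hi, hip, hgap⟩ := hbig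
  have hS : ∀ D ∈ 𝒟, (axisIndices x (2 * p + 1) D).OrdConnected := fun D hD' => by
    obtain ⟨c, rfl⟩ := hD D hD'
    exact (convex_closedBall c r).ordConnected_axisIndices hmono.monotoneOn
  have hcov : ∀ j ∈ Set.Icc 1 (2 * p + 1), ∃ D ∈ 𝒟, j ∈ axisIndices x (2 * p + 1) D :=
    fun _ => hI.exists_mem_axisIndices
  have hsep : ∀ j ∈ Ico 1 (2 * p + 1), ∃ D ∈ 𝒟,
      ¬(j ∈ axisIndices x (2 * p + 1) D ↔ j + 1 ∈ axisIndices x (2 * p + 1) D) :=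
    fun _ => hI.exists_separating_axisIndices hmono.injOn
  have h₁ := sub_add_two_le_two_mul_card_of_separates 𝒟 _ hS (a := 1) (b := 2 * i) (by omega)
    (hcov _ ⟨le_rfl, by omega⟩) (hcov _ ⟨by omega, by omega⟩)
    fun j hj => hsep j (Ico_subset_Ico_right (by omega) hj)
  have h₂ := sub_add_two_le_two_mul_card_of_separates 𝒟 _ hS (a := 2 * i + 2) (b := 2 * p + 1)
    (by omega) (hcov _ ⟨by omega, by omega⟩) (hcov _ ⟨by omega, le_rfl⟩)
    fun j hj => hsep j (Ico_subset_Ico_left (by omega) hj)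
  have hdisj := disjoint_filter_axisIndices_of_two_mul_lt hmono.monotoneOn hD
    (m := 2 * i) (m' := 2 * i + 2) ⟨by omega, by omega⟩ ⟨by omega, by omega⟩ hgap
  set 𝒟₁ := {D ∈ 𝒟 | (axisIndices x (2 * p + 1) D ∩ Set.Icc 1 (2 * i)).Nonempty}
  set 𝒟₂ := {D ∈ 𝒟 | (axisIndices x (2 * p + 1) D ∩ Set.Icc (2 * i + 2) (2 * p + 1)).Nonempty}
  calc p + 2 ≤ #𝒟₁ + #𝒟₂ := by omega
    _ = #(𝒟₁ ∪ 𝒟₂) := (card_union_of_disjoint hdisj).symm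
    _ ≤ #𝒟 := card_le_card (union_subset (filter_subset _ _) (filter_subset _ _))
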